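/- Let 0 ≤ s < r be fixed integers and let j ∈ {s+1,…,r}. Define λ_j(n) = Σ_{ℓ=max{0,j−s}}^{min{j,r−s}} (−1)^ℓ·C(j,ℓ)·C(r−j, r−s−ℓ)·C(n−r−j, r−s−ℓ) and N1(n) = C(r,s)·C(n−r,r−s). Then n^{j−s}·|λ_j(n)|/N1(n) → C(j,s)·(r−s)! / (C(r,s)·(r−j)!) as n → ∞. -/

import Mathlib

/-!
Since `C(m - c, k) ~ m^k / k!`, the `ℓ`-th summand of `λ_j(n)` is of order `n^(r-s-ℓ)`, so
only the summand `ℓ = j - s` survives in `λ_j(n) / n^(r-j)`, which tends to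
`(-1)^(j-s) C(j,s) / (r-j)!`. Likewise `N1(n) / n^(r-s) → C(r,s) / (r-s)!`, and the quotient
of the two limits is the claimed constant.
-/

open Filter

/-- The eigenvalues `λ_j` of the adjacency matrix of `G(n,r,s)`
(here `max{0, j-s}` is the truncated subtraction `j - s`). -/
def johnsonEigenvalue (n r s j : ℕ) : ℤ :=
  ∑ ℓ ∈ Finset.Icc (j - s) (min j (r - s)),
    (-1 : ℤ) ^ ℓ * (j.choose ℓ : ℤ) * ((r - j).choose (r - s - ℓ) : ℤ) *
      ((n - r - j).choose (r - s - ℓ) : ℤ)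

open Asymptotics Topology

lemma isEquivalent_natCast_sub (c : ℕ) :
    (fun n : ℕ => ((n - c : ℕ) : ℝ)) ~[atTop] (fun n : ℕ => (n : ℝ)) := by
  refine IsLittleO.isEquivalent ?_
  have hconst : (fun _ : ℕ => -(c : ℝ)) =o[atTop] (fun n : ℕ => (n : ℝ)) :=
    isLittleO_const_left.2 <| Or.inr <|
      tendsto_norm_atTop_atTop.comp tendsto_natCast_atTop_atTop
  refine hconst.congr' ?_ EventuallyEq.rfl
  filter_upwards [eventually_ge_atTop c] with n hn
  simp [Nat.cast_sub hn]

lemma isEquivalent_choose_sub (c k : ℕ) :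
    (fun n : ℕ => ((n - c).choose k : ℝ)) ~[atTop]
      (fun n : ℕ => (n : ℝ) ^ k / k.factorial) :=
  ((isEquivalent_choose k).comp_tendsto (tendsto_sub_atTop_nat c)).trans
    (((isEquivalent_natCast_sub c).pow k).div IsEquivalent.refl)

lemma tendsto_inv_pow_sub {k m : ℕ} (hkm : k ≤ m) :
    Tendsto (fun n : ℕ => ((n : ℝ) ^ (m - k))⁻¹) atTop (𝓝 (if k = m then 1 else 0)) := by
  split_ifs with h
  · simp [h]
  · exact ((tendsto_pow_atTop (by omega)).comp tendsto_natCast_atTop_atTop).inv_tendsto_atTop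

lemma tendsto_choose_sub_div_pow (c : ℕ) {k m : ℕ} (hkm : k ≤ m) :
    Tendsto (fun n : ℕ => ((n - c).choose k : ℝ) / (n : ℝ) ^ m) atTop
      (𝓝 (if k = m then (k.factorial : ℝ)⁻¹ else 0)) := by
  refine ((isEquivalent_choose_sub c k).div IsEquivalent.refl).symm.tendsto_nhds ?_
  have hlim := (tendsto_inv_pow_sub hkm).const_mul (k.factorial : ℝ)⁻¹
  rw [apply_ite ((k.factorial : ℝ)⁻¹ * ·), mul_one, mul_zero] at hlim
  refine hlim.congr' ?_
  filter_upwards [eventually_ge_atTop 1] with n hn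
  have hn0 : (n : ℝ) ≠ 0 := by positivity
  simp only [Pi.div_apply]
  rw [← Nat.add_sub_of_le hkm, pow_add, Nat.add_sub_cancel_left]
  field_simp

lemma tendsto_johnsonEigenvalue_div_pow {r s j : ℕ} (hsj : s ≤ j) (hjr : j ≤ r) :
    Tendsto (fun n : ℕ => (johnsonEigenvalue n r s j : ℝ) / (n : ℝ) ^ (r - j)) atTop
      (𝓝 ((-1) ^ (j - s) * j.choose s / (r - j).factorial)) := by
  set I := Finset.Icc (j - s) (min j (r - s))
  set a : ℕ → ℝ := fun ℓ => (-1) ^ ℓ * j.choose ℓ * (r - j).choose (r - s - ℓ)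
  have hterm : ∀ ℓ ∈ I, Tendsto
      (fun n : ℕ => a ℓ * (((n - (r + j)).choose (r - s - ℓ) : ℝ) / (n : ℝ) ^ (r - j))) atTop
      (𝓝 (a ℓ * if r - s - ℓ = r - j then ((r - s - ℓ).factorial : ℝ)⁻¹ else 0)) := by
    intro ℓ hℓ
    rw [Finset.mem_Icc] at hℓ
    exact (tendsto_choose_sub_div_pow _ (by omega)).const_mul _
  have hlead : ∀ ℓ ∈ I, (a ℓ * if r - s - ℓ = r - j then ((r - s - ℓ).factorial : ℝ)⁻¹ else 0)
      = if j - s = ℓ then a (j - s) * ((r - j).factorial : ℝ)⁻¹ else 0 := by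
    intro ℓ hℓ
    rw [Finset.mem_Icc] at hℓ
    by_cases h : j - s = ℓ
    · subst h
      rw [if_pos (by omega), if_pos rfl, show r - s - (j - s) = r - j by omega]
    · rw [if_neg (by omega), if_neg h, mul_zero]
  have hlim := tendsto_finsetSum I hterm
  rw [Finset.sum_congr rfl hlead, Finset.sum_ite_eq, if_pos (by simp [I]; omega)] at hlim
  convert hlim using 2 with n
  · simp only [johnsonEigenvalue, Nat.sub_sub n r j]
    push_cast
    rw [Finset.sum_div]
    exact Finset.sum_congr rfl fun ℓ _ => by ring
  · simp only [a, Nat.choose_symm_of_eq_add (Nat.sub_add_cancel hsj).symm,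
      show r - s - (j - s) = r - j by omega, Nat.choose_self]
    ring

theorem stmt_14_general (r s j : ℕ) (hj1 : s + 1 ≤ j) (hjr : j ≤ r) :
    Tendsto (fun n : ℕ =>
        (n : ℝ) ^ (j - s) * |(johnsonEigenvalue n r s j : ℝ)| /
          ((r.choose s : ℝ) * ((n - r).choose (r - s) : ℝ)))
      atTop
      (nhds ((j.choose s : ℝ) * ((r - s).factorial : ℝ) /
        ((r.choose s : ℝ) * ((r - j).factorial : ℝ)))) := by
  have hnum := (tendsto_johnsonEigenvalue_div_pow (r := r) (by omega : s ≤ j) hjr).abs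
  rw [abs_div, abs_mul, abs_pow, abs_neg, abs_one, one_pow, one_mul, Nat.abs_cast,
    Nat.abs_cast] at hnum
  have hden := (tendsto_choose_sub_div_pow r (le_refl (r - s))).const_mul (r.choose s : ℝ)
  rw [if_pos rfl] at hden
  have hchoose : (r.choose s : ℝ) ≠ 0 := by exact_mod_cast (Nat.choose_pos (by omega)).ne'
  have hlim := hnum.div hden (by positivity)
  rw [show (j.choose s : ℝ) / (r - j).factorial / (r.choose s * ((r - s).factorial : ℝ)⁻¹)
      = j.choose s * (r - s).factorial / (r.choose s * (r - j).factorial) by field_simp] at hlim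
  refine hlim.congr' ?_
  filter_upwards [eventually_ge_atTop 1] with n hn
  have hn0 : (n : ℝ) ≠ 0 := by positivity
  simp only [Pi.div_apply]
  have hpow : (n : ℝ) ^ (r - s) = n ^ (j - s) * n ^ (r - j) := by rw [← pow_add]; congr 1; omega
  rw [abs_div, abs_pow, Nat.abs_cast, hpow]
  field_simp

/-- For fixed `0 ≤ s < r` and `j ∈ {s+1,…,r}`,
`n^(j−s)·|λ_j(n)|/N1(n) → C(j,s)·(r−s)!/(C(r,s)·(r−j)!)` as `n → ∞`. -/
theorem stmt_14 (r s j : ℕ) (hs : s < r) (hj1 : s + 1 ≤ j) (hjr : j ≤ r) :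
    Tendsto (fun n : ℕ =>
        (n : ℝ) ^ (j - s) * |(johnsonEigenvalue n r s j : ℝ)| /
          ((r.choose s : ℝ) * ((n - r).choose (r - s) : ℝ)))
      atTop
      (nhds ((j.choose s : ℝ) * ((r - s).factorial : ℝ) /
        ((r.choose s : ℝ) * ((r - j).factorial : ℝ)))) :=
  stmt_14_general r s j hj1 hjr
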